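/- For p, η ∈ [0,1], let A_{p,η} be the amplitude damping channel on 2×2 complex matrices with Kraus operators A₁ = √p·[[1,0],[0,√η]], A₂ = √p·[[0,√(1−η)],[0,0]], A₃ = √(1−p)·[[√η,0],[0,1]], A₄ = √(1−p)·[[0,0],[√(1−η),0]]. Then, with |+⟩ = (e₀+e₁)/√2 and |−⟩ = (e₀−e₁)/√2, one has (1/2)‖A_{p,η}(|+⟩⟨+|) − A_{p,η}(|−⟩⟨−|)‖₁ = √η, and consequently the trace norm contraction coefficient satisfies η_tr(A_{p,η}) ≥ √η. -/

import Mathlib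

/-! The pure states `|+⟩⟨+|` and `|−⟩⟨−|` differ by the Pauli matrix `X`, and the amplitude damping
channel maps `X` to `√η • X` (the `p`- and `(1 - p)`-branches each contribute their weight times
`√η • X`). Since `Xᴴ X = 1`, the positive square root of `(c • X)ᴴ (c • X)` is `c • 1`, so
`‖c • X‖₁ = 2c`; this gives the identity, and exhibits `√η` as one of the ratios whose supremum is
`η_tr`. That supremum is a genuine one because the trace norm is equivalent to the entrywise sup
norm, for which every linear map between matrix spaces is bounded. -/
open Matrix Kronecker BigOperators
open scoped ComplexOrder

noncomputable section

/-- Square root of a positive semidefinite matrix (Mathlib's former `Matrix.PosSemidef.sqrt`). -/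
def Matrix.PosSemidef.sqrt {n 𝕜 : Type*} [Fintype n] [RCLike 𝕜] [DecidableEq n] {A : Matrix n n 𝕜}
    (hA : A.PosSemidef) : Matrix n n 𝕜 :=
  (hA.1.eigenvectorUnitary : Matrix n n 𝕜) *
    diagonal (fun i => ((Real.sqrt (hA.1.eigenvalues i) : ℝ) : 𝕜)) *
    (star hA.1.eigenvectorUnitary : Matrix n n 𝕜)

/-- The trace norm (sum of singular values) of a complex matrix: `tr √(AᴴA)`. -/
def traceNorm {m n : Type*} [Fintype m] [Fintype n] [DecidableEq n] (A : Matrix m n ℂ) : ℝ :=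
  ((Matrix.posSemidef_conjTranspose_mul_self A).sqrt).trace.re

/-- A density matrix: positive semidefinite with trace one. -/
def IsDensity {n : Type*} [Fintype n] [DecidableEq n] (ρ : Matrix n n ℂ) : Prop :=
  ρ.PosSemidef ∧ ρ.trace = 1

/-- Trace norm contraction coefficient of a map on matrices. -/
def etaTr {dA dB : ℕ} (Φ : Matrix (Fin dA) (Fin dA) ℂ → Matrix (Fin dB) (Fin dB) ℂ) : ℝ :=
  sSup {r : ℝ | ∃ ρ σ : Matrix (Fin dA) (Fin dA) ℂ, IsDensity ρ ∧ IsDensity σ ∧ ρ ≠ σ ∧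
    r = traceNorm (Φ ρ - Φ σ) / traceNorm (ρ - σ)}

/-- Optimal success probability for transmitting one of `k` messages through `Φ`. -/
def Psucc {dA dB : ℕ} (Φ : Matrix (Fin dA) (Fin dA) ℂ → Matrix (Fin dB) (Fin dB) ℂ)
    (k : ℕ) : ℝ :=
  sSup {r : ℝ | ∃ (M : Fin k → Matrix (Fin dB) (Fin dB) ℂ)
      (ρ : Fin k → Matrix (Fin dA) (Fin dA) ℂ),
    (∀ i, (M i).PosSemidef) ∧ (∑ i, M i = 1) ∧ (∀ i, IsDensity (ρ i)) ∧
    r = (1 / (k : ℝ)) * ∑ i, ((M i * Φ (ρ i)).trace).re}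

/-- The Euclidean (ℓ₂) norm of a complex vector. -/
def l2norm {n : Type*} [Fintype n] (v : n → ℂ) : ℝ :=
  Real.sqrt (∑ i, ‖v i‖ ^ 2)

/-- Choi state of a map on matrices: `(1/dA) ∑ᵢⱼ Eᵢⱼ ⊗ Φ(Eᵢⱼ)`. -/
def choi {dA dB : ℕ} (Φ : Matrix (Fin dA) (Fin dA) ℂ → Matrix (Fin dB) (Fin dB) ℂ) :
    Matrix (Fin dA × Fin dB) (Fin dA × Fin dB) ℂ :=
  (dA : ℂ)⁻¹ • ∑ i : Fin dA, ∑ j : Fin dA,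
    (Matrix.single i j (1 : ℂ)) ⊗ₖ (Φ (Matrix.single i j (1 : ℂ)))

/-- Kraus operators of the amplitude damping channel `A_{p,η}`. -/
def ampK (p η : ℝ) : Fin 4 → Matrix (Fin 2) (Fin 2) ℂ :=
  ![(Real.sqrt p : ℂ) • !![1, 0; 0, (Real.sqrt η : ℂ)],
    (Real.sqrt p : ℂ) • !![0, (Real.sqrt (1 - η) : ℂ); 0, 0],
    (Real.sqrt (1 - p) : ℂ) • !![(Real.sqrt η : ℂ), 0; 0, 1],
    (Real.sqrt (1 - p) : ℂ) • !![0, 0; (Real.sqrt (1 - η) : ℂ), 0]]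

/-- The state `|+⟩ = (e₀ + e₁)/√2`. -/
def ketPlus : Fin 2 → ℂ := ![((Real.sqrt 2 : ℂ))⁻¹, ((Real.sqrt 2 : ℂ))⁻¹]

/-- The state `|−⟩ = (e₀ − e₁)/√2`. -/
def ketMinus : Fin 2 → ℂ := ![((Real.sqrt 2 : ℂ))⁻¹, -((Real.sqrt 2 : ℂ))⁻¹]

section TraceNorm

variable {m n : Type*} [Fintype m] [Fintype n]

lemma re_trace_conjTranspose_mul_self (A : Matrix m n ℂ) :
    (Aᴴ * A).trace.re = ∑ i, ∑ j, ‖A i j‖ ^ 2 := by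
  simp only [Matrix.trace, Matrix.diag_apply, Matrix.mul_apply, Matrix.conjTranspose_apply,
    Complex.re_sum, Finset.sum_comm (γ := m), RCLike.star_def, ← Complex.normSq_eq_conj_mul_self,
    Complex.ofReal_re, Complex.normSq_eq_norm_sq]

lemma sq_norm_entry_le_sum (A : Matrix m n ℂ) (i : m) (j : n) :
    ‖A i j‖ ^ 2 ≤ ∑ a, ∑ b, ‖A a b‖ ^ 2 :=
  (Finset.single_le_sum (fun b _ ↦ sq_nonneg ‖A i b‖) (Finset.mem_univ j)).trans <|
    Finset.single_le_sum (f := fun a ↦ ∑ b, ‖A a b‖ ^ 2)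
      (fun _ _ ↦ by positivity) (Finset.mem_univ i)

variable [DecidableEq n]

lemma sum_eigenvalues_conjTranspose_mul_self (A : Matrix m n ℂ) :
    ∑ j, (posSemidef_conjTranspose_mul_self A).1.eigenvalues j = ∑ i, ∑ j, ‖A i j‖ ^ 2 := by
  rw [← re_trace_conjTranspose_mul_self,
    (posSemidef_conjTranspose_mul_self A).1.trace_eq_sum_eigenvalues]
  simp

lemma traceNorm_eq_sum_sqrt_eigenvalues (A : Matrix m n ℂ) :
    traceNorm A = ∑ j, √((posSemidef_conjTranspose_mul_self A).1.eigenvalues j) := by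
  rw [traceNorm, Matrix.PosSemidef.sqrt, Matrix.trace_mul_cycle,
    Matrix.UnitaryGroup.star_mul_self, one_mul, Matrix.trace_diagonal, Complex.re_sum]
  simp

lemma traceNorm_nonneg (A : Matrix m n ℂ) : 0 ≤ traceNorm A := by
  rw [traceNorm_eq_sum_sqrt_eigenvalues]
  positivity

lemma norm_entry_le_traceNorm (A : Matrix m n ℂ) (i : m) (j : n) : ‖A i j‖ ≤ traceNorm A := by
  have hA := posSemidef_conjTranspose_mul_self A
  refine (pow_le_pow_iff_left₀ (norm_nonneg _) (traceNorm_nonneg A) two_ne_zero).1 ?_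
  calc ‖A i j‖ ^ 2 ≤ ∑ a, ∑ b, ‖A a b‖ ^ 2 := sq_norm_entry_le_sum A i j
    _ = ∑ k, √(hA.1.eigenvalues k) ^ 2 := by
      rw [← sum_eigenvalues_conjTranspose_mul_self]
      exact Finset.sum_congr rfl fun k _ ↦ (Real.sq_sqrt (hA.eigenvalues_nonneg k)).symm
    _ ≤ traceNorm A ^ 2 := by
      rw [traceNorm_eq_sum_sqrt_eigenvalues]
      exact Finset.sum_sq_le_sq_sum_of_nonneg fun k _ ↦ Real.sqrt_nonneg _

attribute [local instance] Matrix.normedAddCommGroup Matrix.normedSpace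

lemma norm_le_traceNorm (A : Matrix m n ℂ) : ‖A‖ ≤ traceNorm A :=
  (Matrix.norm_le_iff (traceNorm_nonneg A)).2 (norm_entry_le_traceNorm A)

lemma traceNorm_le_card_mul_norm (A : Matrix m n ℂ) :
    traceNorm A ≤ Fintype.card n * (√(Fintype.card m * Fintype.card n) * ‖A‖) := by
  have hA := posSemidef_conjTranspose_mul_self A
  have hsum : ∑ a, ∑ b, ‖A a b‖ ^ 2 ≤ Fintype.card m * Fintype.card n * ‖A‖ ^ 2 := by
    calc ∑ a, ∑ b, ‖A a b‖ ^ 2 ≤ ∑ _a : m, ∑ _b : n, ‖A‖ ^ 2 := by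
          gcongr
          exact Matrix.norm_entry_le_entrywise_sup_norm A
      _ = _ := by simp [mul_assoc]
  have heig (k : n) : hA.1.eigenvalues k ≤ Fintype.card m * Fintype.card n * ‖A‖ ^ 2 := by
    refine le_trans ?_ hsum
    rw [← sum_eigenvalues_conjTranspose_mul_self]
    exact Finset.single_le_sum (fun k _ ↦ hA.eigenvalues_nonneg k) (Finset.mem_univ k)
  calc traceNorm A = ∑ k, √(hA.1.eigenvalues k) := traceNorm_eq_sum_sqrt_eigenvalues A
    _ ≤ ∑ _k : n, √(Fintype.card m * Fintype.card n * ‖A‖ ^ 2) := by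
      gcongr with k
      exact heig k
    _ = _ := by
      rw [Finset.sum_const, Finset.card_univ, nsmul_eq_mul, Real.sqrt_mul (by positivity),
        Real.sqrt_sq (norm_nonneg A)]

lemma exists_traceNorm_map_le [DecidableEq m] (L : Matrix n n ℂ →ₗ[ℂ] Matrix m m ℂ) :
    ∃ C, 0 ≤ C ∧ ∀ X, traceNorm (L X) ≤ C * traceNorm X := by
  obtain ⟨C, hC, hL⟩ := (LinearMap.toContinuousLinearMap L).isBoundedLinearMap.bound
  refine ⟨Fintype.card m * √(Fintype.card m * Fintype.card m) * C, by positivity, fun X ↦ ?_⟩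
  calc traceNorm (L X) ≤ Fintype.card m * (√(Fintype.card m * Fintype.card m) * ‖L X‖) :=
        traceNorm_le_card_mul_norm (L X)
    _ ≤ Fintype.card m * (√(Fintype.card m * Fintype.card m) * (C * traceNorm X)) := by
        gcongr
        exact (hL X).trans (by gcongr; exact norm_le_traceNorm X)
    _ = _ := by ring

end TraceNorm

open scoped MatrixOrder in
lemma Matrix.PosSemidef.sqrt_eq_cfcSqrt {n : Type*} [Fintype n] [DecidableEq n]
    {X : Matrix n n ℂ} (hX : X.PosSemidef) : hX.sqrt = CFC.sqrt X := by
  rw [CFC.sqrt_eq_cfc, cfc_nnreal_eq_real _ X, hX.1.cfc_eq]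
  simp only [Matrix.IsHermitian.cfc, Matrix.PosSemidef.sqrt, Unitary.conjStarAlgAut_apply]
  congr 3
  funext i
  simp [Real.coe_toNNReal', max_eq_left (hX.eigenvalues_nonneg i)]

open scoped MatrixOrder in
lemma traceNorm_eq_re_trace_of_sq_eq {n : Type*} [Fintype n] [DecidableEq n]
    {A B : Matrix n n ℂ} (hB : B.PosSemidef) (h : B ^ 2 = Aᴴ * A) : traceNorm A = B.trace.re := by
  rw [traceNorm, Matrix.PosSemidef.sqrt_eq_cfcSqrt, (CFC.sqrt_eq_iff _ _
    (posSemidef_conjTranspose_mul_self A).nonneg hB.nonneg).2 (by rw [← h, pow_two])]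

def krausMap {ι m n : Type*} [Fintype ι] [Fintype n] (K : ι → Matrix m n ℂ) :
    Matrix n n ℂ →ₗ[ℂ] Matrix m m ℂ where
  toFun x := ∑ i, K i * x * (K i)ᴴ
  map_add' x y := by simp only [Matrix.mul_add, Matrix.add_mul, Finset.sum_add_distrib]
  map_smul' c x := by simp [Finset.smul_sum]

lemma krausMap_apply {ι m n : Type*} [Fintype ι] [Fintype n] (K : ι → Matrix m n ℂ)
    (x : Matrix n n ℂ) : krausMap K x = ∑ i, K i * x * (K i)ᴴ := rfl

-- `etaTr` is an `sSup` of reals, junk-valued unless bounded above: `C` provides the bound.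
lemma le_etaTr {dA dB : ℕ} (L : Matrix (Fin dA) (Fin dA) ℂ →ₗ[ℂ] Matrix (Fin dB) (Fin dB) ℂ)
    {ρ σ : Matrix (Fin dA) (Fin dA) ℂ} (hρ : IsDensity ρ) (hσ : IsDensity σ) (hne : ρ ≠ σ) :
    traceNorm (L ρ - L σ) / traceNorm (ρ - σ) ≤ etaTr L := by
  obtain ⟨C, hC, hL⟩ := exists_traceNorm_map_le L
  refine le_csSup ⟨C, ?_⟩ ⟨ρ, σ, hρ, hσ, hne, rfl⟩
  rintro _ ⟨ρ', σ', -, -, -, rfl⟩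
  rw [← map_sub]
  exact div_le_of_le_mul₀ (traceNorm_nonneg _) hC (hL _)

lemma isDensity_vecMulVec_self_star {n : Type*} [Fintype n] [DecidableEq n] {v : n → ℂ}
    (hv : v ⬝ᵥ star v = 1) : IsDensity (vecMulVec v (star v)) :=
  ⟨posSemidef_vecMulVec_self_star v, by rw [trace_vecMulVec, hv]⟩

def pauliX : Matrix (Fin 2) (Fin 2) ℂ := !![0, 1; 1, 0]

lemma pauliX_mul_self : pauliX * pauliX = 1 := by
  ext i j; fin_cases i <;> fin_cases j <;> simp [pauliX]

lemma conjTranspose_pauliX : pauliXᴴ = pauliX := by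
  ext i j; fin_cases i <;> fin_cases j <;> simp [pauliX]

lemma traceNorm_smul_pauliX {c : ℝ} (hc : 0 ≤ c) : traceNorm ((c : ℂ) • pauliX) = 2 * c := by
  have hB : ((c : ℂ) • (1 : Matrix (Fin 2) (Fin 2) ℂ)).PosSemidef :=
    Matrix.PosSemidef.one.smul (Complex.zero_le_real.2 hc)
  rw [traceNorm_eq_re_trace_of_sq_eq hB]
  · simp [mul_comm]
  · rw [conjTranspose_smul, conjTranspose_pauliX, smul_mul_smul_comm, pauliX_mul_self, sq,
      smul_mul_smul_comm, one_mul, Complex.star_def, Complex.conj_ofReal]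

lemma traceNorm_pauliX : traceNorm pauliX = 2 := by
  simpa using traceNorm_smul_pauliX zero_le_one

lemma inv_sqrt_two_mul_self : ((√2 : ℝ) : ℂ)⁻¹ * ((√2 : ℝ) : ℂ)⁻¹ = 2⁻¹ := by
  rw [← mul_inv, ← Complex.ofReal_mul, Real.mul_self_sqrt zero_le_two, Complex.ofReal_ofNat]

lemma ketPlus_dotProduct_star : ketPlus ⬝ᵥ star ketPlus = 1 := by
  norm_num [dotProduct, ketPlus, Fin.sum_univ_two, Complex.conj_ofReal, inv_sqrt_two_mul_self]

lemma ketMinus_dotProduct_star : ketMinus ⬝ᵥ star ketMinus = 1 := by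
  norm_num [dotProduct, ketMinus, Fin.sum_univ_two, Complex.conj_ofReal, inv_sqrt_two_mul_self]

lemma vecMulVec_ketPlus_sub_vecMulVec_ketMinus :
    vecMulVec ketPlus (star ketPlus) - vecMulVec ketMinus (star ketMinus) = pauliX := by
  ext i j
  fin_cases i <;> fin_cases j <;>
    simp only [Matrix.sub_apply, vecMulVec_apply] <;>
    norm_num [ketPlus, ketMinus, pauliX, Complex.conj_ofReal, inv_sqrt_two_mul_self]

lemma krausMap_ampK_pauliX {p : ℝ} (hp : p ∈ Set.Icc (0 : ℝ) 1) (η : ℝ) :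
    krausMap (ampK p η) pauliX = (√η : ℂ) • pauliX := by
  have hp2 : (√p : ℂ) * (√p : ℂ) = p := by
    rw [← Complex.ofReal_mul, Real.mul_self_sqrt hp.1]
  have hq2 : (√(1 - p) : ℂ) * (√(1 - p) : ℂ) = 1 - p := by
    rw [← Complex.ofReal_mul, Real.mul_self_sqrt (sub_nonneg.2 hp.2)]; push_cast; rfl
  ext i j
  fin_cases i <;> fin_cases j <;>
    simp [krausMap_apply, ampK, pauliX, Fin.sum_univ_four, Fin.sum_univ_two,
      conjTranspose_apply, Complex.conj_ofReal, vecMul, dotProduct] <;>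
    linear_combination (√η : ℂ) * hp2 + (√η : ℂ) * hq2

theorem amplitude_damping_lower_bound_general (p η : ℝ)
    (hp : p ∈ Set.Icc (0 : ℝ) 1)
    (Φ : Matrix (Fin 2) (Fin 2) ℂ → Matrix (Fin 2) (Fin 2) ℂ)
    (hΦ : ∀ x, Φ x = ∑ i, ampK p η i * x * (ampK p η i)ᴴ) :
    (1 / 2) * traceNorm
        (Φ (Matrix.vecMulVec ketPlus (star ketPlus))
          - Φ (Matrix.vecMulVec ketMinus (star ketMinus)))
      = Real.sqrt η ∧
    Real.sqrt η ≤ etaTr Φ := by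
  obtain rfl : Φ = krausMap (ampK p η) := funext hΦ
  have hdiff : krausMap (ampK p η) (vecMulVec ketPlus (star ketPlus))
      - krausMap (ampK p η) (vecMulVec ketMinus (star ketMinus)) = (√η : ℂ) • pauliX := by
    rw [← map_sub, vecMulVec_ketPlus_sub_vecMulVec_ketMinus, krausMap_ampK_pauliX hp]
  have hne : vecMulVec ketPlus (star ketPlus) ≠ vecMulVec ketMinus (star ketMinus) := by
    intro h
    have h01 := congr_fun₂ vecMulVec_ketPlus_sub_vecMulVec_ketMinus 0 1
    simp [h, pauliX] at h01
  refine ⟨by rw [hdiff, traceNorm_smul_pauliX (Real.sqrt_nonneg η)]; ring, ?_⟩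
  calc √η = traceNorm ((√η : ℂ) • pauliX) / traceNorm pauliX := by
        rw [traceNorm_smul_pauliX (Real.sqrt_nonneg η), traceNorm_pauliX]; ring
    _ ≤ etaTr (krausMap (ampK p η)) := by
      rw [← hdiff, ← vecMulVec_ketPlus_sub_vecMulVec_ketMinus]
      exact le_etaTr _ (isDensity_vecMulVec_self_star ketPlus_dotProduct_star)
        (isDensity_vecMulVec_self_star ketMinus_dotProduct_star) hne

/-- for the amplitude damping channel `A_{p,η}`,
`(1/2)‖A_{p,η}(|+⟩⟨+|) − A_{p,η}(|−⟩⟨−|)‖₁ = √η`, hence `η_tr(A_{p,η}) ≥ √η`. -/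
theorem amplitude_damping_lower_bound (p η : ℝ)
    (hp : p ∈ Set.Icc (0 : ℝ) 1) (hη : η ∈ Set.Icc (0 : ℝ) 1)
    (Φ : Matrix (Fin 2) (Fin 2) ℂ → Matrix (Fin 2) (Fin 2) ℂ)
    (hΦ : ∀ x, Φ x = ∑ i, ampK p η i * x * (ampK p η i)ᴴ) :
    (1 / 2) * traceNorm
        (Φ (Matrix.vecMulVec ketPlus (star ketPlus))
          - Φ (Matrix.vecMulVec ketMinus (star ketMinus)))
      = Real.sqrt η ∧
    Real.sqrt η ≤ etaTr Φ :=
  amplitude_damping_lower_bound_general p η hp Φ hΦ
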